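/- Define f : (1,∞) → ℝ by f(x) = 2/(3x) − 1/(12(x−1)) + 5/(12(x+1)) − ln(1 + 1/x) − (1/(12(x+1)³) + 11/(120(x+1)⁴)) + (1/(12x³) + 11/(120x⁴)). Then f is strictly increasing on (1,∞). -/
import Mathlib


noncomputable def f (x : ℝ) : ℝ :=
  2 / (3 * x) - 1 / (12 * (x - 1)) + 5 / (12 * (x + 1)) - Real.log (1 + 1 / x)
    - (1 / (12 * (x + 1) ^ 3) + 11 / (120 * (x + 1) ^ 4))
    + (1 / (12 * x ^ 3) + 11 / (120 * x ^ 4))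

lemma f_hasDerivAt (x : ℝ) (hx : 1 < x) :
    HasDerivAt f
      ((160 + 1200 * (x - 1) + 2348 * (x - 1) ^ 2 + 2055 * (x - 1) ^ 3 + 875 * (x - 1) ^ 4
        + 150 * (x - 1) ^ 5) / (60 * x ^ 5 * (x - 1) ^ 2 * (x + 1) ^ 5)) x := by
  have hx0 : x ≠ 0 := by linarith
  have hx1 : x - 1 ≠ 0 := by intro h; nlinarith [h]
  have hx1' : x + 1 ≠ 0 := by positivity
  have h3x : (3 : ℝ) * x ≠ 0 := by positivity
  have h12m : (12 : ℝ) * (x - 1) ≠ 0 := by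
    intro h; apply hx1; linarith [h]
  have h12p : (12 : ℝ) * (x + 1) ≠ 0 := by positivity
  have h12p3 : (12 : ℝ) * (x + 1) ^ 3 ≠ 0 := by positivity
  have h120p4 : (120 : ℝ) * (x + 1) ^ 4 ≠ 0 := by positivity
  have h12x3 : (12 : ℝ) * x ^ 3 ≠ 0 := by positivity
  have h120x4 : (120 : ℝ) * x ^ 4 ≠ 0 := by positivity
  have hlogarg : 1 + 1 / x ≠ 0 := by
    have : 0 < 1 + 1 / x := by positivity
    exact ne_of_gt this
  have hid := hasDerivAt_id x
  have h1 : HasDerivAt (fun y : ℝ => 2 / (3 * y))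
      ((0 * (3 * x) - 2 * (3 * 1)) / (3 * x) ^ 2) x :=
    (hasDerivAt_const x 2).div (hid.const_mul 3) h3x
  have h2 : HasDerivAt (fun y : ℝ => 1 / (12 * (y - 1)))
      ((0 * (12 * (x - 1)) - 1 * (12 * 1)) / (12 * (x - 1)) ^ 2) x :=
    (hasDerivAt_const x 1).div ((hid.sub_const 1).const_mul 12) h12m
  have h3 : HasDerivAt (fun y : ℝ => 5 / (12 * (y + 1)))
      ((0 * (12 * (x + 1)) - 5 * (12 * 1)) / (12 * (x + 1)) ^ 2) x :=
    (hasDerivAt_const x 5).div ((hid.add_const 1).const_mul 12) h12p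
  have hu : HasDerivAt (fun y : ℝ => 1 + 1 / y)
      (0 + (0 * x - 1 * 1) / x ^ 2) x :=
    (hasDerivAt_const x 1).add ((hasDerivAt_const x 1).div hid hx0)
  have h4 : HasDerivAt (fun y : ℝ => Real.log (1 + 1 / y))
      ((0 + (0 * x - 1 * 1) / x ^ 2) / (1 + 1 / x)) x := hu.log hlogarg
  have hp3 : HasDerivAt (fun y : ℝ => 12 * (y + 1) ^ 3)
      (12 * (3 * (x + 1) ^ 2 * 1)) x := ((hid.add_const 1).pow 3).const_mul 12
  have h5 : HasDerivAt (fun y : ℝ => 1 / (12 * (y + 1) ^ 3))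
      ((0 * (12 * (x + 1) ^ 3) - 1 * (12 * (3 * (x + 1) ^ 2 * 1))) / (12 * (x + 1) ^ 3) ^ 2) x :=
    (hasDerivAt_const x 1).div hp3 h12p3
  have hp4 : HasDerivAt (fun y : ℝ => 120 * (y + 1) ^ 4)
      (120 * (4 * (x + 1) ^ 3 * 1)) x := ((hid.add_const 1).pow 4).const_mul 120
  have h6 : HasDerivAt (fun y : ℝ => 11 / (120 * (y + 1) ^ 4))
      ((0 * (120 * (x + 1) ^ 4) - 11 * (120 * (4 * (x + 1) ^ 3 * 1))) / (120 * (x + 1) ^ 4) ^ 2) x :=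
    (hasDerivAt_const x 11).div hp4 h120p4
  have hq3 : HasDerivAt (fun y : ℝ => 12 * y ^ 3) (12 * (3 * x ^ 2 * 1)) x :=
    (hid.pow 3).const_mul 12
  have h7 : HasDerivAt (fun y : ℝ => 1 / (12 * y ^ 3))
      ((0 * (12 * x ^ 3) - 1 * (12 * (3 * x ^ 2 * 1))) / (12 * x ^ 3) ^ 2) x :=
    (hasDerivAt_const x 1).div hq3 h12x3
  have hq4 : HasDerivAt (fun y : ℝ => 120 * y ^ 4) (120 * (4 * x ^ 3 * 1)) x :=
    (hid.pow 4).const_mul 120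
  have h8 : HasDerivAt (fun y : ℝ => 11 / (120 * y ^ 4))
      ((0 * (120 * x ^ 4) - 11 * (120 * (4 * x ^ 3 * 1))) / (120 * x ^ 4) ^ 2) x :=
    (hasDerivAt_const x 11).div hq4 h120x4
  have H := ((((h1.sub h2).add h3).sub h4).sub (h5.add h6)).add (h7.add h8)
  have Hf : HasDerivAt f _ x := H
  convert Hf using 1
  field_simp
  ring

theorem f_strictMonoOn : StrictMonoOn f (Set.Ioi (1 : ℝ)) := by
  apply StrictMonoOn.mono (s := Set.Ioi (1 : ℝ)) ?_ le_rfl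
  apply strictMonoOn_of_deriv_pos (convex_Ioi 1)
  · intro x hx
    exact (f_hasDerivAt x hx).differentiableAt.continuousAt.continuousWithinAt
  · intro x hx
    rw [interior_Ioi] at hx
    rw [(f_hasDerivAt x hx).deriv]
    have hx1 : 0 < x - 1 := by linarith [Set.mem_Ioi.mp hx]
    have hx0 : 0 < x := by linarith
    have hxp : 0 < x + 1 := by linarith
    positivity
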